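/- arXiv:1610.09678 — 2 statements merged into one kernel-verified Lean document; each statement's English description precedes it below -/
import Mathlib

section
/- Let $X$ be a compact Hausdorff space, $G = \{g_1,\dots,g_s\}$ a finite group acting freely on $S^n$, and $\varphi : X \to S^n$ a continuous map. Then $X_\varphi = \{(x_1,\dots,x_s) \in X^s : g_i \varphi(x_1) = \varphi(x_i),\ i=1,\dots,s\}$ is a compact space on which $G$ acts freely via $g_i(x_1,\dots,x_s) = (x_{\sigma_{g_i}(1)},\dots,x_{\sigma_{g_i}(s)})$, where $\sigma_{g_i}(k) = j$ iff $g_k g_i = g_j$. -/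
/-- For a compact Hausdorff space `X`, a finite group `G` (with `g_1 = 1`) acting freely
on `S^n`, and a continuous map `φ : X → S^n`, the space
`X_φ = {(x_g)_{g ∈ G} ∈ X^G : g • φ(x_1) = φ(x_g) for all g}` is a compact space on which
`G` acts freely by `(g • x)_k = x_{k g}` (the coordinate permutation
`σ_{g_i}(k) = j ↔ g_k g_i = g_j`). -/
theorem stmt6 (n : ℕ) (G : Type) [Group G] [Fintype G]
    (X : Type) [TopologicalSpace X] [CompactSpace X] [T2Space X]
    [MulAction G (Metric.sphere (0 : EuclideanSpace ℝ (Fin (n + 1))) 1)]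
    (hGfree : ∀ (g : G) (y : Metric.sphere (0 : EuclideanSpace ℝ (Fin (n + 1))) 1),
      g • y = y → g = 1)
    (hGcont : ∀ g : G,
      Continuous fun y : Metric.sphere (0 : EuclideanSpace ℝ (Fin (n + 1))) 1 => g • y)
    (φ : C(X, Metric.sphere (0 : EuclideanSpace ℝ (Fin (n + 1))) 1))
    (Xφ : Set (G → X)) (hXφ : Xφ = {x | ∀ g : G, g • φ (x 1) = φ (x g)})
    (act : G → (G → X) → (G → X)) (hact : act = fun g x k => x (k * g)) :
    IsCompact Xφ ∧
    (∀ (g : G), ∀ x ∈ Xφ, act g x ∈ Xφ) ∧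
    (∀ x, act 1 x = x) ∧
    (∀ g g' x, act g (act g' x) = act (g * g') x) ∧
    (∀ (g : G), ∀ x ∈ Xφ, act g x = x → g = 1) := by
  subst hXφ hact
  refine ⟨?_, ?_, ?_, ?_, ?_⟩
  · apply IsClosed.isCompact
    have : {x : G → X | ∀ g : G, g • φ (x 1) = φ (x g)} =
        ⋂ g : G, {x : G → X | g • φ (x 1) = φ (x g)} := by
      ext x; simp [Set.mem_iInter]
    rw [this]
    refine isClosed_iInter fun g => ?_
    exact isClosed_eq (((hGcont g).comp φ.continuous).comp (continuous_apply 1))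
      (φ.continuous.comp (continuous_apply g))
  · intro g x hx h
    simp only
    rw [one_mul, ← hx g, ← hx (h * g), mul_smul]
  · intro x; funext k; simp
  · intro g g' x; funext k; simp [mul_assoc]
  · intro g x hx h
    have h1 : x (1 * g) = x 1 := congrFun h 1
    rw [one_mul] at h1
    have := hx g
    rw [h1] at this
    exact hGfree g _ this
end

section
/- (Tverberg's theorem, linear case.) Let $f$ be an affine (linear) map from the $N$-dimensional simplex $\Delta_N$ to $\mathbb{R}^d$ with $N = (d+1)(r-1)$. Then there exist $r$ pairwise disjoint faces $\sigma_1,\dots,\sigma_r$ of $\Delta_N$ such that $f(\sigma_1) \cap \cdots \cap f(\sigma_r) \neq \emptyset$. Equivalently: any $(r-1)(d+1)+1$ points in $\mathbb{R}^d$ can be partitioned into $r$ subsets whose convex hulls have a common point. -/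
/-- The closed face of the standard `N`-simplex spanned by the vertex set `S`. -/
def face (N : ℕ) (S : Finset (Fin (N + 1))) : Set (Fin (N + 1) → ℝ) :=
  {x | x ∈ stdSimplex ℝ (Fin (N + 1)) ∧ ∀ i, i ∉ S → x i = 0}

/-- The boundary `∂Δ_N` of the standard `N`-simplex. -/
def sBoundary (N : ℕ) : Set (Fin (N + 1) → ℝ) :=
  {x | x ∈ stdSimplex ℝ (Fin (N + 1)) ∧ ∃ i, x i = 0}

/-!
Sarkaria's tensor trick reduces the theorem to Bárány's colourful Carathéodory theorem. Lift each
point `p_j` to `p̂_j = (p_j, 1) ∈ ℝ^{d+1}` and let `u_0, …, u_q ∈ ℝ^q` be vectors whose only linear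
relation is `∑ u_i = 0`. For each of the more than `q(d+1) = dim (ℝ^q ⊗ ℝ^{d+1})` colours `j`, the
origin is the barycentre of the points `u_i ⊗ p̂_j`, so some rainbow choice `u_{c j} ⊗ p̂_j` has the
origin in its convex hull. In `∑ λ_j u_{c j} ⊗ p̂_j = ∑_i u_i ⊗ (∑_{c j = i} λ_j p̂_j) = 0` the
vectors `∑_{c j = i} λ_j p̂_j` must then all be equal: the parts `c⁻¹(i)` carry equal masses and
have a common centre of mass.
-/

open Finset
open scoped RealInnerProductSpace

lemma AffineIndependent.linearIndependent_of_forall_apply_eq_one {k V ι : Type*} [Ring k]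
    [AddCommGroup V] [Module k V] {p : ι → V} (hp : AffineIndependent k p) (φ : V →ₗ[k] k)
    (hφ : ∀ i, φ (p i) = 1) : LinearIndependent k p := by
  refine linearIndependent_iff'.2 fun s g hg => hp.eq_zero_of_sum_eq_zero ?_ hg
  simpa [hφ] using congrArg φ hg

section ColorfulCaratheodory

variable {E : Type*} [NormedAddCommGroup E] [InnerProductSpace ℝ E]

lemma norm_sq_le_inner_of_isMinOn_norm {K : Set E} (hK : Convex ℝ K) {z : E} (hz : z ∈ K)
    (hmin : IsMinOn norm K z) {y : E} (hy : y ∈ K) : ‖z‖ ^ 2 ≤ ⟪z, y⟫ := by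
  have : Nonempty K := ⟨⟨z, hz⟩⟩
  have hinf : ‖0 - z‖ = ⨅ w : K, ‖0 - (w : E)‖ :=
    le_antisymm (le_ciInf fun w => by simpa using hmin w.2)
      (ciInf_le (f := fun w : K => ‖0 - (w : E)‖)
        ⟨0, Set.forall_mem_range.2 fun _ => norm_nonneg _⟩ ⟨z, hz⟩)
  have := (norm_eq_iInf_iff_real_inner_le_zero hK hz).1 hinf y hy
  rw [zero_sub, inner_neg_left, inner_sub_right, real_inner_self_eq_norm_sq] at this
  linarith

/-- By Carathéodory `z` is a positive combination of affinely independent points `g j`; these lie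
on the hyperplane `⟪z, ·⟫ = ‖z‖²`, hence are linearly independent, so at most `dim E` are used. -/
lemma exists_mem_convexHull_image_ne_of_isMinOn_norm [FiniteDimensional ℝ E] {ι : Type*}
    [Fintype ι] (hcard : Module.finrank ℝ E < Fintype.card ι) (g : ι → E) {z : E} (hz : z ≠ 0)
    (hzK : z ∈ convexHull ℝ (Set.range g)) (hmin : IsMinOn norm (convexHull ℝ (Set.range g)) z) :
    ∃ j₀, z ∈ convexHull ℝ (g '' {j | j ≠ j₀}) := by
  obtain ⟨ι', _, p, w, hpg, hp, hw0, hw1, hwz⟩ := eq_pos_convex_span_of_mem_convexHull hzK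
  have hle : ∀ i, ‖z‖ ^ 2 ≤ ⟪z, p i⟫ := fun i => norm_sq_le_inner_of_isMinOn_norm
    (convex_convexHull ℝ _) hzK hmin (subset_convexHull ℝ _ (hpg ⟨i, rfl⟩))
  have hplane : ∀ i, ⟪z, p i⟫ = ‖z‖ ^ 2 := by
    have hsum : ∑ i, w i * (⟪z, p i⟫ - ‖z‖ ^ 2) = 0 := by
      simp only [mul_sub, sum_sub_distrib, ← sum_mul, hw1, one_mul, ← real_inner_smul_right,
        ← inner_sum, hwz, real_inner_self_eq_norm_sq, sub_self]
    intro i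
    have := (sum_eq_zero_iff_of_nonneg fun i _ => mul_nonneg (hw0 i).le
      (sub_nonneg.2 (hle i))).1 hsum i (mem_univ i)
    linarith [(mul_eq_zero.1 this).resolve_left (hw0 i).ne']
  have hpli : LinearIndependent ℝ p := hp.linearIndependent_of_forall_apply_eq_one
    ((‖z‖ ^ 2)⁻¹ • innerₛₗ ℝ z) fun i => by
      simp [hplane i, norm_ne_zero_iff.2 hz]
  choose σ hσ using fun i => hpg ⟨i, rfl⟩
  obtain ⟨j₀, hj₀⟩ : ∃ j₀, j₀ ∉ Set.range σ := by
    by_contra! h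
    have := Fintype.card_le_of_surjective σ h
    have := hpli.fintype_card_le_finrank
    omega
  have hzp : z ∈ convexHull ℝ (Set.range p) :=
    mem_convexHull_of_exists_fintype w p (fun i => (hw0 i).le) hw1 Set.mem_range_self hwz
  refine ⟨j₀, convexHull_mono ?_ hzp⟩
  rintro _ ⟨i, rfl⟩
  exact ⟨σ i, fun h => hj₀ ⟨i, h⟩, hσ i⟩

lemma exists_inner_nonpos_of_zero_mem_convexHull {κ : Type*} (z : E) {v : κ → E}
    (h0 : (0 : E) ∈ convexHull ℝ (Set.range v)) : ∃ k, ⟪z, v k⟫ ≤ 0 := by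
  by_contra! hpos
  have hhalf : Convex ℝ {y : E | 0 < ⟪z, y⟫} := convex_halfSpace_gt (innerₛₗ ℝ z).isLinear 0
  simpa using convexHull_min (Set.range_subset_iff.2 hpos : Set.range v ⊆ _) hhalf h0

/-- **Colorful Carathéodory theorem** (Bárány). The proof takes a rainbow hull closest to the
origin; if its nearest point `z` were nonzero, one colour could be swapped for a point on the far
side of the hyperplane through `0` orthogonal to `z`, producing a closer rainbow hull. -/
theorem exists_zero_mem_convexHull_range_colorful [FiniteDimensional ℝ E] {ι κ : Type*}
    [Fintype ι] [Finite κ] (hcard : Module.finrank ℝ E < Fintype.card ι) (V : ι → κ → E)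
    (hV : ∀ j, (0 : E) ∈ convexHull ℝ (Set.range (V j))) :
    ∃ c : ι → κ, (0 : E) ∈ convexHull ℝ (Set.range fun j => V j (c j)) := by
  classical
  obtain ⟨j⟩ : Nonempty ι := Fintype.card_pos_iff.1 (by omega)
  obtain ⟨-, k, -⟩ := convexHull_nonempty_iff.1 ⟨0, hV j⟩
  let hull : (ι → κ) → Set E := fun c => convexHull ℝ (Set.range fun j => V j (c j))
  have hcompact : IsCompact (⋃ c, hull c) :=
    isCompact_iUnion fun c => (Set.finite_range _).isCompact_convexHull ℝ
  obtain ⟨z, hz, hmin⟩ := hcompact.exists_isMinOn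
    ⟨V j k, Set.mem_iUnion.2 ⟨fun _ => k, subset_convexHull ℝ _ ⟨j, rfl⟩⟩⟩
    continuous_norm.continuousOn
  obtain ⟨c, hzc⟩ := Set.mem_iUnion.1 hz
  refine ⟨c, ?_⟩
  by_contra hz0
  replace hz0 : z ≠ 0 := by rintro rfl; exact hz0 hzc
  obtain ⟨j₀, hj₀⟩ := exists_mem_convexHull_image_ne_of_isMinOn_norm hcard _ hz0 hzc
    (hmin.on_subset (Set.subset_iUnion hull c))
  obtain ⟨k₀, hk₀⟩ := exists_inner_nonpos_of_zero_mem_convexHull z (hV j₀)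
  let c' := Function.update c j₀ k₀
  have hzc' : z ∈ hull c' := by
    refine convexHull_mono ?_ hj₀
    rintro _ ⟨j, hj, rfl⟩
    exact ⟨j, by simp [c', Function.update_of_ne hj]⟩
  have hkc' : V j₀ k₀ ∈ hull c' := subset_convexHull ℝ _ ⟨j₀, by simp [c']⟩
  have := norm_sq_le_inner_of_isMinOn_norm (convex_convexHull ℝ _) hzc'
    (hmin.on_subset (Set.subset_iUnion hull c')) hkc'
  have := norm_pos_iff.2 hz0
  nlinarith

end ColorfulCaratheodory

lemma exists_weights_of_mem_convexHull_range {R E ι : Type*} [Field R] [LinearOrder R]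
    [IsStrictOrderedRing R] [AddCommGroup E] [Module R E] [Fintype ι] {v : ι → E} {x : E}
    (hx : x ∈ convexHull R (Set.range v)) :
    ∃ w : ι → R, (∀ i, 0 ≤ w i) ∧ ∑ i, w i = 1 ∧ ∑ i, w i • v i = x := by
  classical
  rw [convexHull_range_eq_exists_affineCombination] at hx
  obtain ⟨s, w, hw0, hw1, rfl⟩ := hx
  refine ⟨fun i => if i ∈ s then w i else 0, fun i => ?_, ?_, ?_⟩
  · dsimp only
    split_ifs with hi
    exacts [hw0 i hi, le_rfl]
  · rwa [sum_ite_mem, univ_inter]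
  · simp only [ite_smul, zero_smul, sum_ite_mem, univ_inter]
    exact (s.affineCombination_eq_linear_combination v w hw1).symm

abbrev homogenize {d : ℕ} (x : Fin d → ℝ) : Fin (d + 1) → ℝ := Fin.snoc x 1

lemma centerMass_eq_of_sum_smul_homogenize_eq {ι : Type*} {d : ℕ} (P : ι → Fin d → ℝ)
    (w : ι → ℝ) {t t' : Finset ι}
    (h : ∑ j ∈ t, w j • homogenize (P j) = ∑ j ∈ t', w j • homogenize (P j)) :
    t.centerMass w P = t'.centerMass w P := by
  have hw : ∑ j ∈ t, w j = ∑ j ∈ t', w j := by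
    simpa using congrFun h (Fin.last d)
  have hP : ∑ j ∈ t, w j • P j = ∑ j ∈ t', w j • P j := by
    ext k
    simpa using congrFun h k.castSucc
  rw [centerMass, centerMass, hw, hP]

section Sarkaria

variable {q : ℕ}

/-- `u_i = e_i` for `i < q` and `u_q = -(e_0 + ⋯ + e_{q-1})`. -/
def sarkariaVec (q : ℕ) (i : Fin (q + 1)) (a : Fin q) : ℝ :=
  (if i = a.castSucc then 1 else 0) - if i = Fin.last q then 1 else 0

lemma sum_sarkariaVec (a : Fin q) : ∑ i, sarkariaVec q i a = 0 := by
  simp [sarkariaVec, sum_sub_distrib]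

lemma eq_last_of_forall_sum_sarkariaVec_smul_eq_zero {M : Type*} [AddCommGroup M] [Module ℝ M]
    {S : Fin (q + 1) → M} (h : ∀ a, ∑ i, sarkariaVec q i a • S i = 0) (i : Fin (q + 1)) :
    S i = S (Fin.last q) := by
  induction i using Fin.lastCases with
  | last => rfl
  | cast a =>
    have := h a
    simp only [sarkariaVec, sub_smul, ite_smul, one_smul, zero_smul, sum_sub_distrib,
      sum_ite_eq', mem_univ, if_true] at this
    exact sub_eq_zero.1 this

variable {ι : Type*} {d : ℕ}

/-- `u_i ⊗ p̂_j`. -/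
noncomputable def sarkariaLift (q : ℕ) (P : ι → Fin d → ℝ) (j : ι) (i : Fin (q + 1)) :
    EuclideanSpace ℝ (Fin q × Fin (d + 1)) :=
  WithLp.toLp 2 fun x => sarkariaVec q i x.1 * homogenize (P j) x.2

lemma zero_mem_convexHull_range_sarkariaLift (P : ι → Fin d → ℝ) (j : ι) :
    (0 : EuclideanSpace ℝ (Fin q × Fin (d + 1))) ∈
      convexHull ℝ (Set.range (sarkariaLift q P j)) := by
  refine mem_convexHull_of_exists_fintype (fun _ => ((q : ℝ) + 1)⁻¹) _ (fun _ => by positivity)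
    ?_ Set.mem_range_self ?_
  · simp [field]
  · ext x
    simp [sarkariaLift, WithLp.ofLp_sum, ← mul_sum, ← sum_mul, sum_sarkariaVec]

lemma sum_fiber_smul_homogenize_eq_of_sum_smul_sarkariaLift_eq_zero [Fintype ι]
    (P : ι → Fin d → ℝ) {w : ι → ℝ} {c : ι → Fin (q + 1)}
    (hw : ∑ j, w j • sarkariaLift q P j (c j) = 0) (i : Fin (q + 1)) :
    ∑ j with c j = i, w j • homogenize (P j)
      = ∑ j with c j = Fin.last q, w j • homogenize (P j) := by
  refine eq_last_of_forall_sum_sarkariaVec_smul_eq_zero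
    (S := fun i => ∑ j with c j = i, w j • homogenize (P j)) (fun a => ?_) i
  ext b
  have := congrArg (· (a, b)) hw
  simp only [sarkariaLift, WithLp.ofLp_sum, WithLp.ofLp_smul, Finset.sum_apply, Pi.smul_apply,
    smul_eq_mul, WithLp.ofLp_zero, Pi.zero_apply] at this
  rw [← sum_fiberwise univ c] at this
  refine Eq.trans ?_ this
  simp only [Finset.sum_apply, Pi.smul_apply, smul_eq_mul, mul_sum]
  refine sum_congr rfl fun i _ => sum_congr rfl fun j hj => ?_
  rw [(mem_filter.1 hj).2]
  ring

end Sarkaria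

theorem exists_tverberg_coloring {ι : Type*} [Fintype ι] {q d : ℕ}
    (hcard : q * (d + 1) < Fintype.card ι) (P : ι → Fin d → ℝ) :
    ∃ c : ι → Fin (q + 1), (⋂ i, convexHull ℝ (P '' {j | c j = i})).Nonempty := by
  classical
  obtain ⟨c, hc⟩ := exists_zero_mem_convexHull_range_colorful (by simpa using hcard)
    (sarkariaLift q P) (zero_mem_convexHull_range_sarkariaLift P)
  obtain ⟨w, hw0, hw1, hw⟩ := exists_weights_of_mem_convexHull_range hc
  have hfiber := sum_fiber_smul_homogenize_eq_of_sum_smul_sarkariaLift_eq_zero P hw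
  have hmass : ∀ i, ∑ j with c j = i, w j = ∑ j with c j = Fin.last q, w j := fun i => by
    simpa using congrFun (hfiber i) (Fin.last d)
  have hpos : ∀ i, 0 < ∑ j with c j = i, w j := by
    have htotal : ∑ i, ∑ j with c j = i, w j = 1 := by rw [sum_fiberwise]; exact hw1
    simp only [hmass, sum_const, card_univ, Fintype.card_fin, nsmul_eq_mul] at htotal
    intro i
    rw [hmass i]
    nlinarith
  refine ⟨c, (univ.filter (c · = Fin.last q)).centerMass w P, Set.mem_iInter.2 fun i => ?_⟩
  rw [← centerMass_eq_of_sum_smul_homogenize_eq P w (hfiber i)]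
  exact centerMass_mem_convexHull _ (fun j _ => hw0 j) (hpos i)
    fun j hj => ⟨j, (mem_filter.1 hj).2, rfl⟩

theorem exists_tverberg_partition {ι : Type*} [Fintype ι] {q d : ℕ}
    (hcard : q * (d + 1) < Fintype.card ι) (P : ι → Fin d → ℝ) :
    ∃ T : Fin (q + 1) → Finset ι, (Pairwise fun i i' => Disjoint (T i) (T i')) ∧
      (∀ x, ∃ i, x ∈ T i) ∧ (⋂ i, convexHull ℝ (P '' T i)).Nonempty := by
  classical
  obtain ⟨c, hc⟩ := exists_tverberg_coloring hcard P
  refine ⟨fun i => univ.filter (c · = i), fun i i' hii' => ?_, fun x => ⟨c x, by simp⟩,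
    by simpa using hc⟩
  exact disjoint_filter.2 fun j _ hi hi' => hii' (hi.symm.trans hi')

lemma convex_face (N : ℕ) (S : Finset (Fin (N + 1))) : Convex ℝ (face N S) :=
  fun _ hx _ hy _ _ ha hb hab => ⟨convex_stdSimplex ℝ _ hx.1 hy.1 ha hb hab,
    fun i hi => by simp [hx.2 i hi, hy.2 i hi]⟩

lemma convexHull_image_single_subset_face (N : ℕ) (S : Finset (Fin (N + 1))) :
    convexHull ℝ ((fun j => Pi.single j 1) '' S) ⊆ face N S :=
  convexHull_min (by
    rintro _ ⟨j, hj, rfl⟩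
    exact ⟨single_mem_stdSimplex ℝ j,
      fun i hi => Pi.single_eq_of_ne (by rintro rfl; exact hi hj) _⟩)
    (convex_face N S)

theorem stmt16_general (r d : ℕ) (hr : 1 ≤ r) (N : ℕ) (hN : N = (d + 1) * (r - 1))
    (f : (Fin (N + 1) → ℝ) →ᵃ[ℝ] (Fin d → ℝ)) :
    (∃ σ : Fin r → Finset (Fin (N + 1)),
      (Pairwise fun i i' => Disjoint (σ i) (σ i')) ∧
      (⋂ i, f '' face N (σ i)).Nonempty) ∧
    ∀ P : Fin ((r - 1) * (d + 1) + 1) → (Fin d → ℝ),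
      ∃ T : Fin r → Finset (Fin ((r - 1) * (d + 1) + 1)),
        (Pairwise fun i i' => Disjoint (T i) (T i')) ∧
        (∀ x, ∃ i, x ∈ T i) ∧
        (⋂ i, convexHull ℝ (P '' (T i))).Nonempty := by
  obtain ⟨q, rfl⟩ : ∃ q, r = q + 1 := ⟨r - 1, by omega⟩
  refine ⟨?_, fun P => exists_tverberg_partition (by simp) P⟩
  obtain ⟨σ, hσ, -, y, hy⟩ := exists_tverberg_partition (q := q)
    (by simp [hN, mul_comm]) fun j : Fin (N + 1) => f (Pi.single j 1)
  refine ⟨σ, hσ, y, Set.mem_iInter.2 fun i => ?_⟩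
  have hyi := Set.mem_iInter.1 hy i
  rw [← Set.image_image f, ← f.image_convexHull] at hyi
  exact Set.image_mono (convexHull_image_single_subset_face N (σ i)) hyi

/-- **Tverberg's theorem (linear case).**  For every affine map `f : Δ_N → ℝ^d` with
`N = (d+1)(r-1)` there are `r` pairwise disjoint faces of `Δ_N` whose images under `f`
have a common point; equivalently, any `(r-1)(d+1) + 1` points of `ℝ^d` can be
partitioned into `r` subsets whose convex hulls have a common point. -/
theorem stmt16 (r d : ℕ) (hr : 1 ≤ r) (hd : 1 ≤ d) (N : ℕ) (hN : N = (d + 1) * (r - 1))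
    (f : (Fin (N + 1) → ℝ) →ᵃ[ℝ] (Fin d → ℝ)) :
    (∃ σ : Fin r → Finset (Fin (N + 1)),
      (Pairwise fun i i' => Disjoint (σ i) (σ i')) ∧
      (⋂ i, f '' face N (σ i)).Nonempty) ∧
    ∀ P : Fin ((r - 1) * (d + 1) + 1) → (Fin d → ℝ),
      ∃ T : Fin r → Finset (Fin ((r - 1) * (d + 1) + 1)),
        (Pairwise fun i i' => Disjoint (T i) (T i')) ∧
        (∀ x, ∃ i, x ∈ T i) ∧
        (⋂ i, convexHull ℝ (P '' (T i))).Nonempty :=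
  stmt16_general r d hr N hN f
end
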